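/- On the duplex repeated path network 𝒢_R on N ≥ 3 agents with all agents using Protocol OR and seed set S₀ = {j}, for all indices with 1 < j < i < N (and symmetrically 1 < i < j < N), the probability that agent i is active at steady state of the multiplex LTM is ℙ_LTM(i) = (3/4)^{|i−j|}. -/

import Mathlib

open MeasureTheory

inductive Protocol
  | OR
  | AND
deriving DecidableEq

noncomputable def ltmStep {n m : ℕ} (w : Fin m → Fin n → Fin n → ℝ)
    (u : Fin n → Protocol) (μ : Fin n → Fin m → ℝ)
    (A : Finset (Fin n)) : Finset (Fin n) :=
  A ∪ Finset.univ.filter fun i =>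
    (u i = Protocol.OR ∧ ∃ k, μ i k < ∑ j ∈ A, w k i j) ∨
    (u i = Protocol.AND ∧ ∀ k, μ i k < ∑ j ∈ A, w k i j)

noncomputable def ltmSS {n m : ℕ} (w : Fin m → Fin n → Fin n → ℝ)
    (u : Fin n → Protocol) (S₀ : Finset (Fin n))
    (μ : Fin n → Fin m → ℝ) : Finset (Fin n) :=
  (ltmStep w u μ)^[n] S₀

noncomputable def thMeasure (n m : ℕ) : Measure (Fin n → Fin m → ℝ) :=
  Measure.pi fun _ => Measure.pi fun _ => volume.restrict (Set.Icc (0:ℝ) 1)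

noncomputable def pLTM {n m : ℕ} (w : Fin m → Fin n → Fin n → ℝ)
    (u : Fin n → Protocol) (S₀ : Finset (Fin n)) (i : Fin n) : ℝ :=
  (thMeasure n m {μ | i ∈ ltmSS w u S₀ μ}).toReal

def lemStep {n m : ℕ} (S₀ : Finset (Fin n)) (u : Fin n → Protocol)
    (σ : Fin n → Fin m → Fin n) (A : Finset (Fin n)) : Finset (Fin n) :=
  S₀ ∪ A ∪ Finset.univ.filter fun i =>
    (u i = Protocol.OR ∧ ∃ k, σ i k ∈ A) ∨
    (u i = Protocol.AND ∧ ∀ k, σ i k ∈ A)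

def UReachable {n m : ℕ} (S₀ : Finset (Fin n)) (u : Fin n → Protocol)
    (σ : Fin n → Fin m → Fin n) (i : Fin n) : Prop :=
  i ∈ (lemStep S₀ u σ)^[n] S₀

instance {n m : ℕ} (S₀ : Finset (Fin n)) (u : Fin n → Protocol)
    (σ : Fin n → Fin m → Fin n) (i : Fin n) : Decidable (UReachable S₀ u σ i) := by
  unfold UReachable; infer_instance

noncomputable def rProb {n m : ℕ} (w : Fin m → Fin n → Fin n → ℝ)
    (S₀ : Finset (Fin n)) (u : Fin n → Protocol) (i : Fin n) : ℝ :=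
  ∑ σ : Fin n → Fin m → Fin n,
    if UReachable S₀ u σ i then ∏ a : Fin n, ∏ k : Fin m, w k a (σ a k) else 0

noncomputable def casCen {n m : ℕ} (w : Fin m → Fin n → Fin n → ℝ)
    (u : Fin n → Protocol) (j : Fin n) : ℝ :=
  ∑ i : Fin n, pLTM w u {j} i

noncomputable def pathW (N : ℕ) (i j : Fin N) : ℝ :=
  if j.val = i.val + 1 ∨ i.val = j.val + 1 then
    (if i.val = 0 ∨ i.val = N - 1 then 1 else 1/2)
  else 0

noncomputable def cycleW (N : ℕ) (i j : Fin N) : ℝ :=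
  if (i.val + 1) % N = j.val ∨ (j.val + 1) % N = i.val then 1/2 else 0

noncomputable def permW2 (N : ℕ) (i j : Fin N) : ℝ :=
  if ((i.val + 1) % N = j.val ∨ (j.val + 1) % N = i.val) ∧
      ¬((i.val = N - 2 ∧ j.val = N - 1) ∨ (i.val = N - 1 ∧ j.val = N - 2)) then
    (if i.val = N - 2 ∨ i.val = N - 1 then 1 else 1/2)
  else 0

/-! Call an agent *open* if one of its two thresholds is below `1/2`. An interior agent of the
path gives weight `1/2` to each neighbour, so under OR an open agent is activated by any active
neighbour. Hence the cascade from `j` reaches `i` once every agent between them (`j` excluded,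
`i` included) is open. Conversely, a closed agent `a` on that stretch can only ever see active
agents on `j`'s side of it, i.e. at most one active neighbour, of total weight `1/2`, so it never
activates and nothing beyond it does either. Thresholds are a.e. nonnegative, so up to a null set
the event `i ∈ S n` is a product event of `dist i j` independent factors `1 - (1/2)^2 = 3/4`. -/

instance : IsProbabilityMeasure (volume.restrict (Set.Icc (0 : ℝ) 1)) := ⟨by simp⟩

lemma ae_nonneg_thMeasure (n m : ℕ) : ∀ᵐ μ ∂thMeasure n m, ∀ b k, 0 ≤ μ b k := by
  have hlayer : ∀ᵐ f ∂Measure.pi (fun _ : Fin m => volume.restrict (Set.Icc (0 : ℝ) 1)),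
      ∀ k, 0 ≤ f k :=
    Filter.eventually_all.2 fun _ => Measure.tendsto_eval_ae_ae.eventually <|
      (ae_restrict_mem measurableSet_Icc).mono fun _ hx => hx.1
  exact Filter.eventually_all.2 fun b =>
    (Measure.tendsto_eval_ae_ae (μ := fun _ : Fin n => _) (i := b)).eventually hlayer

lemma pi_uniform_setOf_exists_lt (m : ℕ) {c : ℝ} (hc0 : 0 ≤ c) :
    Measure.pi (fun _ : Fin m => volume.restrict (Set.Icc (0 : ℝ) 1)) {f | ∃ k, f k < c} =
      1 - ENNReal.ofReal (1 - c) ^ m := by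
  have hcompl : {f : Fin m → ℝ | ∃ k, f k < c}ᶜ = Set.univ.pi fun _ => Set.Ici c := by
    ext f; simp [Pi.le_def]
  have hinter : Set.Ici c ∩ Set.Icc 0 1 = Set.Icc c 1 := by
    ext x; simp only [Set.mem_inter_iff, Set.mem_Ici, Set.mem_Icc]; constructor <;> grind
  rw [← compl_compl {f : Fin m → ℝ | ∃ k, f k < c}, prob_compl_eq_one_sub, hcompl,
    Measure.pi_pi, Finset.prod_const, Finset.card_univ, Fintype.card_fin,
    Measure.restrict_apply measurableSet_Ici, hinter, Real.volume_Icc]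
  rw [hcompl]; exact MeasurableSet.univ_pi fun _ => measurableSet_Ici

lemma thMeasure_setOf_forall_exists_lt {n m : ℕ} (s : Finset (Fin n)) {c : ℝ} (hc0 : 0 ≤ c)
    (hc1 : c ≤ 1) :
    (thMeasure n m {μ | ∀ b ∈ s, ∃ k, μ b k < c}).toReal = (1 - (1 - c) ^ m) ^ s.card := by
  have hpi : {μ : Fin n → Fin m → ℝ | ∀ b ∈ s, ∃ k, μ b k < c} =
      (s : Set (Fin n)).pi fun _ => {f | ∃ k, f k < c} := by
    ext μ; simp
  rw [thMeasure, hpi, Measure.pi_pi_finset, Finset.prod_const, pi_uniform_setOf_exists_lt m hc0,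
    ENNReal.toReal_pow, ENNReal.toReal_sub_of_le, ENNReal.toReal_pow,
    ENNReal.toReal_ofReal (by linarith), ENNReal.toReal_one]
  · exact pow_le_one₀ zero_le (ENNReal.ofReal_le_one.2 (by linarith))
  · exact ENNReal.one_ne_top

lemma mem_ltmStep_OR {n m : ℕ} (w : Fin m → Fin n → Fin n → ℝ) (μ : Fin n → Fin m → ℝ)
    (A : Finset (Fin n)) (i : Fin n) :
    i ∈ ltmStep w (fun _ => Protocol.OR) μ A ↔ i ∈ A ∨ ∃ k, μ i k < ∑ j ∈ A, w k i j := by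
  simp [ltmStep]

lemma subset_ltmStep {n m : ℕ} (w : Fin m → Fin n → Fin n → ℝ) (u : Fin n → Protocol)
    (μ : Fin n → Fin m → ℝ) (A : Finset (Fin n)) : A ⊆ ltmStep w u μ A :=
  Finset.subset_union_left

lemma monotone_iterate_ltmStep {n m : ℕ} (w : Fin m → Fin n → Fin n → ℝ) (u : Fin n → Protocol)
    (μ : Fin n → Fin m → ℝ) (A : Finset (Fin n)) :
    Monotone fun t => (ltmStep w u μ)^[t] A :=
  monotone_nat_of_le_succ fun t => by
    rw [Function.iterate_succ_apply']; exact subset_ltmStep w u μ _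

section PathNetwork

variable {N m : ℕ}

lemma pathW_nonneg (b c : Fin N) : 0 ≤ pathW N b c := by
  unfold pathW; split_ifs <;> norm_num

lemma pathW_eq_half_of_interior (b c : Fin N) (hb1 : 1 ≤ b.val) (hb2 : b.val < N - 1)
    (hadj : c.val = b.val + 1 ∨ b.val = c.val + 1) : pathW N b c = 1 / 2 := by
  rw [pathW, if_pos hadj, if_neg (by omega)]

lemma adj_of_pathW_ne_zero {b c : Fin N} (h : pathW N b c ≠ 0) :
    c.val = b.val + 1 ∨ b.val = c.val + 1 := by
  by_contra hadj; exact h (if_neg hadj)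

def OnSideOf (a j c : Fin N) : Prop :=
  c ≠ a ∧ (c.val < a.val ↔ j.val < a.val)

lemma sum_pathW_le_half {a j : Fin N} {A : Finset (Fin N)} (ha1 : 1 ≤ a.val) (ha2 : a.val < N - 1)
    (hA : ∀ c ∈ A, OnSideOf a j c) :
    ∑ c ∈ A, pathW N a c ≤ 1 / 2 := by
  set B := A.filter fun c => c.val = a.val + 1 ∨ a.val = c.val + 1
  have hcard : B.card ≤ 1 := by
    refine Finset.card_le_one.2 fun c hc c' hc' => ?_
    simp only [B, Finset.mem_filter] at hc hc'
    have := (hA c hc.1).2; have := (hA c' hc'.1).2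
    exact Fin.ext (by omega)
  calc ∑ c ∈ A, pathW N a c = ∑ c ∈ B, pathW N a c :=
        (Finset.sum_filter_of_ne fun _ _ h => adj_of_pathW_ne_zero h).symm
    _ = B.card * (1 / 2 : ℝ) := by
        rw [Finset.sum_congr rfl fun c hc =>
            pathW_eq_half_of_interior a c ha1 ha2 (Finset.mem_filter.1 hc).2,
          Finset.sum_const, nsmul_eq_mul]
    _ ≤ 1 / 2 := by
        have : (B.card : ℝ) ≤ 1 := by exact_mod_cast hcard
        linarith

def pathSegment (i j : Fin N) : Finset (Fin N) :=
  Finset.Ioc j i ∪ Finset.Ico i j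

lemma mem_pathSegment {i j b : Fin N} :
    b ∈ pathSegment i j ↔ (j.val < b.val ∧ b.val ≤ i.val) ∨ (i.val ≤ b.val ∧ b.val < j.val) := by
  simp only [pathSegment, Finset.mem_union, Finset.mem_Ioc, Finset.mem_Ico, Fin.lt_def,
    Fin.le_def]

lemma card_pathSegment (i j : Fin N) : (pathSegment i j).card = Nat.dist i.val j.val := by
  rw [pathSegment, Finset.card_union_of_disjoint, Fin.card_Ioc, Fin.card_Ico, Nat.dist, add_comm]
  exact Finset.disjoint_left.2 fun b hb hb' => by
    simp only [Finset.mem_Ioc, Finset.mem_Ico, Fin.lt_def, Fin.le_def] at hb hb'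
    omega

local notation "pathStep" => ltmStep (fun _ : Fin m => pathW N) (fun _ => Protocol.OR)

lemma mem_pathStep_of_adj (μ : Fin N → Fin m → ℝ) {A : Finset (Fin N)} {b c : Fin N}
    (hc : c ∈ A) (hb1 : 1 ≤ b.val) (hb2 : b.val < N - 1)
    (hadj : c.val = b.val + 1 ∨ b.val = c.val + 1) (hopen : ∃ k, μ b k < 1 / 2) :
    b ∈ pathStep μ A := by
  obtain ⟨k, hk⟩ := hopen
  refine (mem_ltmStep_OR _ μ A b).2 (Or.inr ⟨k, hk.trans_le ?_⟩)
  rw [← pathW_eq_half_of_interior b c hb1 hb2 hadj]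
  exact Finset.single_le_sum (fun c _ => pathW_nonneg b c) hc

lemma onSideOf_of_mem_pathStep (μ : Fin N → Fin m → ℝ) (hμ : ∀ b k, 0 ≤ μ b k)
    {a j : Fin N} (ha1 : 1 ≤ a.val) (ha2 : a.val < N - 1) (hclosed : ∀ k, 1 / 2 ≤ μ a k)
    {A : Finset (Fin N)} (hA : ∀ c ∈ A, OnSideOf a j c) :
    ∀ b ∈ pathStep μ A, OnSideOf a j b := by
  intro b hb
  rcases (mem_ltmStep_OR _ μ A b).1 hb with hb | ⟨k, hk⟩
  · exact hA b hb
  have hsum : ∑ _c ∈ A, (0 : ℝ) < ∑ c ∈ A, pathW N b c := by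
    rw [Finset.sum_const_zero]; exact (hμ b k).trans_lt hk
  obtain ⟨c, hc, hpos⟩ := Finset.exists_lt_of_sum_lt hsum
  have hadj := adj_of_pathW_ne_zero hpos.ne'
  have hba : b ≠ a := by
    rintro rfl
    exact (hk.trans_le (sum_pathW_le_half ha1 ha2 hA)).not_ge (hclosed k)
  obtain ⟨hca, hside⟩ := hA c hc
  refine ⟨hba, ?_⟩
  have := Fin.val_ne_of_ne hba
  have := Fin.val_ne_of_ne hca
  omega

lemma mem_iterate_pathStep_of_open (μ : Fin N → Fin m → ℝ) (i j : Fin N)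
    (hseg : ∀ b ∈ pathSegment i j, 1 ≤ b.val ∧ b.val < N - 1 ∧ ∃ k, μ b k < 1 / 2) :
    i ∈ (pathStep μ)^[Nat.dist i.val j.val] {j} := by
  induction hd : Nat.dist i.val j.val generalizing i with
  | zero =>
    obtain rfl : i = j := Fin.ext (Nat.eq_of_dist_eq_zero hd)
    exact Finset.mem_singleton_self i
  | succ n ih =>
    simp only [Nat.dist] at hd
    obtain ⟨hi1, hi2, hopen⟩ := hseg i (mem_pathSegment.2 (by omega))
    let c : Fin N := ⟨if j.val < i.val then i.val - 1 else i.val + 1, by split_ifs <;> omega⟩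
    have hc : c ∈ (pathStep μ)^[n] {j} := by
      refine ih c (fun b hb => hseg b (mem_pathSegment.2 ?_)) ?_
      · have := mem_pathSegment.1 hb; simp only [c] at this; split_ifs at this <;> omega
      · simp only [Nat.dist, c]; split_ifs <;> omega
    rw [Function.iterate_succ_apply']
    exact mem_pathStep_of_adj μ hc hi1 hi2 (by simp only [c]; split_ifs <;> omega) hopen

lemma notMem_iterate_pathStep_of_closed (μ : Fin N → Fin m → ℝ) (hμ : ∀ b k, 0 ≤ μ b k)
    {i j a : Fin N} (ha : a ∈ pathSegment i j) (ha1 : 1 ≤ a.val) (ha2 : a.val < N - 1)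
    (hclosed : ∀ k, 1 / 2 ≤ μ a k) (t : ℕ) :
    i ∉ (pathStep μ)^[t] {j} := by
  have ha' := mem_pathSegment.1 ha
  have hside : ∀ c ∈ (pathStep μ)^[t] {j}, OnSideOf a j c := by
    induction t with
    | zero =>
      simp only [Function.iterate_zero_apply, Finset.mem_singleton, forall_eq]
      exact ⟨fun h => by rw [h] at ha'; omega, Iff.rfl⟩
    | succ t ih =>
      rw [Function.iterate_succ_apply']
      exact onSideOf_of_mem_pathStep μ hμ ha1 ha2 hclosed ih
  intro hi
  obtain ⟨hia, hside⟩ := hside i hi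
  have := Fin.val_ne_of_ne hia
  omega

lemma mem_ltmSS_pathW_iff (μ : Fin N → Fin m → ℝ) (hμ : ∀ b k, 0 ≤ μ b k) (i j : Fin N)
    (hseg : ∀ b ∈ pathSegment i j, 1 ≤ b.val ∧ b.val < N - 1) :
    i ∈ ltmSS (fun _ : Fin m => pathW N) (fun _ => Protocol.OR) {j} μ ↔
      ∀ b ∈ pathSegment i j, ∃ k, μ b k < 1 / 2 := by
  refine ⟨fun hi b hb => ?_, fun hopen => ?_⟩
  · by_contra! hclosed
    exact notMem_iterate_pathStep_of_closed μ hμ hb (hseg b hb).1 (hseg b hb).2 hclosed N hi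
  · refine monotone_iterate_ltmStep _ _ μ {j} ?_
      (mem_iterate_pathStep_of_open μ i j fun b hb => ⟨(hseg b hb).1, (hseg b hb).2, hopen b hb⟩)
    simp only [Nat.dist]; omega

end PathNetwork

theorem repeated_path_OR_prob_general (N : ℕ) (i j : Fin N)
    (hi1 : 1 ≤ i.val) (hi2 : i.val < N - 1) :
    pLTM (fun _ : Fin 2 => pathW N) (fun _ => Protocol.OR) {j} i =
      (3/4 : ℝ) ^ (Nat.dist i.val j.val) := by
  have hseg : ∀ b ∈ pathSegment i j, 1 ≤ b.val ∧ b.val < N - 1 := fun b hb => by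
    have := mem_pathSegment.1 hb; omega
  have hevent : {μ | i ∈ ltmSS (fun _ : Fin 2 => pathW N) (fun _ => Protocol.OR) {j} μ}
      =ᵐ[thMeasure N 2] {μ | ∀ b ∈ pathSegment i j, ∃ k, μ b k < 1 / 2} := by
    filter_upwards [ae_nonneg_thMeasure N 2] with μ hμ
    exact propext (mem_ltmSS_pathW_iff μ hμ i j hseg)
  rw [pLTM, measure_congr hevent, thMeasure_setOf_forall_exists_lt _ (by norm_num) (by norm_num),
    card_pathSegment]
  norm_num

/-- on the duplex repeated path network on `N ≥ 3` agents with all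
agents using Protocol OR and seed `{j}`, for interior agents `i ≠ j`
(1-based: `1 < j < i < N` or `1 < i < j < N`), ℙ_LTM(i) = (3/4)^{|i−j|}.
(Agents are 0-indexed: 1-based agent `i` is `Fin N` value `i−1`.) -/
theorem repeated_path_OR_prob (N : ℕ) (hN : 3 ≤ N) (i j : Fin N)
    (hi1 : 1 ≤ i.val) (hi2 : i.val < N - 1)
    (hj1 : 1 ≤ j.val) (hj2 : j.val < N - 1) (hij : i ≠ j) :
    pLTM (fun _ : Fin 2 => pathW N) (fun _ => Protocol.OR) {j} i =
      (3/4 : ℝ) ^ (Nat.dist i.val j.val) :=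
  repeated_path_OR_prob_general N i j hi1 hi2
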